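/- Let g : C^n → C^n be analytic near 0 with g(0) = 0, and let A = Dg(0) be diagonalizable with eigenvalues λ₁,…,λₙ and det A ≠ 0. If the system ẋ = g(x) possesses an analytic Lie symmetry X_φ of order k near the origin (i.e., the Taylor expansion of φ starts with terms of order k), then there exist nonnegative integers k₁,…,kₙ with k₁+…+kₙ = k and an index j ∈ {1,…,n} such that Σᵢ kᵢλᵢ = λⱼ. -/
import Mathlib


open scoped BigOperators

open Filter Asymptotics Topology Finset

lemma limit_of_vanishing {E F : Type*} [NormedAddCommGroup E] [NormedSpace ℂ E]
    [NormedAddCommGroup F] [NormedSpace ℂ F] {f : E → F}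
    {p : FormalMultilinearSeries ℂ E F} (hf : HasFPowerSeriesAt f p 0) (j : ℕ) (x : E)
    (hlow : ∀ m, m < j → (p m fun _ => x) = 0) :
    Filter.Tendsto (fun t : ℂ => (t ^ j)⁻¹ • f (t • x)) (𝓝[≠] (0:ℂ))
      (𝓝 (p j fun _ => x)) := by
  have hsm : ∀ (m : ℕ) (t : ℂ), (p m fun _ => t • x) = t ^ m • (p m fun _ => x) := by
    intro m t
    simpa [Finset.prod_const] using (p m).map_smul_univ (fun _ => t) (fun _ => x)
  have hps : ∀ t : ℂ, p.partialSum (j+1) (t • x) = t ^ j • (p j fun _ => x) := by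
    intro t
    rw [FormalMultilinearSeries.partialSum, Finset.sum_eq_single j]
    · exact hsm j t
    · intro m hm hne
      have : m < j := by
        have := Finset.mem_range.mp hm
        omega
      rw [hsm m t, hlow m this, smul_zero]
    · intro h; exact absurd (Finset.self_mem_range_succ j) h
  have hline : Tendsto (fun t : ℂ => t • x) (𝓝[≠] (0:ℂ)) (𝓝 (0:E)) := by
    have h1 : Continuous (fun t : ℂ => t • x) := continuous_id.smul continuous_const
    have h2 : Tendsto (fun t : ℂ => t • x) (𝓝[≠] (0:ℂ)) (𝓝 ((0:ℂ) • x)) :=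
      (h1.tendsto 0).mono_left nhdsWithin_le_nhds
    simpa using h2
  have hO2 := (hf.isBigO_sub_partialSum_pow (j+1)).comp_tendsto hline
  rw [Asymptotics.isBigO_iff] at hO2
  obtain ⟨C, hC⟩ := hO2
  have hbd : ∀ᶠ t : ℂ in 𝓝[≠] (0:ℂ),
      ‖(t ^ j)⁻¹ • f (t • x) - (p j fun _ => x)‖ ≤ (C * ‖x‖ ^ (j+1)) * ‖t‖ := by
    filter_upwards [hC, self_mem_nhdsWithin] with t ht ht0
    have ht0' : (t : ℂ) ≠ 0 := ht0
    have h1 : (t ^ j)⁻¹ • f (t • x) - (p j fun _ => x)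
        = (t ^ j)⁻¹ • (f (t • x) - p.partialSum (j+1) (t • x)) := by
      rw [hps, smul_sub, smul_smul, inv_mul_cancel₀ (pow_ne_zero _ ht0'), one_smul]
    rw [h1, norm_smul]
    have h2 : ‖f (0 + t • x) - p.partialSum (j+1) (t • x)‖ ≤ C * ‖t‖^(j+1) * ‖x‖^(j+1) := by
      calc ‖f (0 + t • x) - p.partialSum (j+1) (t • x)‖ ≤ C * ‖‖t • x‖ ^ (j+1)‖ := ht
        _ = C * ‖t • x‖ ^ (j+1) := by rw [norm_pow, norm_norm]
        _ = C * ‖t‖^(j+1) * ‖x‖^(j+1) := by rw [norm_smul, mul_pow, mul_assoc]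
    rw [zero_add] at h2
    calc ‖(t^j)⁻¹‖ * ‖f (t • x) - p.partialSum (j+1) (t • x)‖
        ≤ ‖(t^j)⁻¹‖ * (C * ‖t‖^(j+1) * ‖x‖^(j+1)) := by
          apply mul_le_mul_of_nonneg_left h2 (norm_nonneg _)
      _ = (C * ‖x‖^(j+1)) * ‖t‖ := by
          rw [norm_inv, norm_pow]
          field_simp [ht0']
          ring
  have htends : Tendsto (fun t : ℂ => (t ^ j)⁻¹ • f (t • x) - (p j fun _ => x))
      (𝓝[≠] (0:ℂ)) (𝓝 0) := by
    apply squeeze_zero_norm' hbd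
    have : Tendsto (fun t : ℂ => (C * ‖x‖ ^ (j+1)) * ‖t‖) (𝓝 (0:ℂ)) (𝓝 ((C * ‖x‖^(j+1)) * ‖(0:ℂ)‖)) :=
      (continuous_const.mul continuous_norm).tendsto 0
    simpa using this.mono_left nhdsWithin_le_nhds
  simpa using htends.add_const (p j fun _ => x)

lemma derivSeries_term_zero {E F : Type*} [NormedAddCommGroup E] [NormedSpace ℂ E]
    [NormedAddCommGroup F] [NormedSpace ℂ F]
    (p : FormalMultilinearSeries ℂ E F) (m : ℕ) (h : p (m+1) = 0) :
    p.derivSeries m = 0 := by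
  have h' : p (1+m) = 0 := by rw [Nat.add_comm]; exact h
  have hcos : p.changeOriginSeries 1 m = 0 := by
    rw [FormalMultilinearSeries.changeOriginSeries]
    apply Finset.sum_eq_zero
    intro s _
    rw [FormalMultilinearSeries.changeOriginSeriesTerm, h']
    exact LinearIsometryEquiv.map_zero _
  ext v w
  simp [FormalMultilinearSeries.derivSeries, hcos]

lemma iteratedFDeriv_zero_of_series_zero :
    ∀ (j : ℕ) {E : Type} [NormedAddCommGroup E] [NormedSpace ℂ E]
    {F : Type} [NormedAddCommGroup F] [NormedSpace ℂ F] [CompleteSpace F]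
    {f : E → F} {p : FormalMultilinearSeries ℂ E F} {r : ENNReal},
    HasFPowerSeriesOnBall f p 0 r → (∀ m, m ≤ j → p m = 0) →
    iteratedFDeriv ℂ j f 0 = 0 := by
  intro j
  induction j with
  | zero =>
    intro E _ _ F _ _ _ f p r h hz
    have h0 := h.iteratedFDeriv_zero_apply_diag
    rw [h0, hz 0 le_rfl]
  | succ j ih =>
    intro E _ _ F _ _ _ f p r h hz
    have hd : HasFPowerSeriesOnBall (fderiv ℂ f) p.derivSeries 0 r := h.fderiv
    have hz' : ∀ m, m ≤ j → p.derivSeries m = 0 := fun m hm =>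
      derivSeries_term_zero p m (hz (m+1) (by omega))
    have IH := ih hd hz'
    ext v
    rw [iteratedFDeriv_succ_apply_right, IH]
    rfl

/-- Truncation below `k` of a power series representation is still a representation,
provided the truncated (diagonal) terms vanish. -/
lemma hasFPowerSeriesOnBall_trunc {E F : Type*} [NormedAddCommGroup E] [NormedSpace ℂ E]
    [NormedAddCommGroup F] [NormedSpace ℂ F]
    {f : E → F} {p : FormalMultilinearSeries ℂ E F} {r : ENNReal} {k : ℕ}
    (h : HasFPowerSeriesOnBall f p 0 r)
    (hd : ∀ m, m < k → ∀ y : E, (p m fun _ => y) = 0) :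
    HasFPowerSeriesOnBall f (fun m => if m < k then 0 else p m) 0 r := by
  constructor
  · -- r ≤ radius of truncated series
    apply le_trans h.r_le
    apply FormalMultilinearSeries.radius_le_of_le
    intro n
    split
    · simp
    · exact le_rfl
  · exact h.r_pos
  · intro y hy
    have hs := h.hasSum hy
    have he : (fun m => (if m < k then (0 : ContinuousMultilinearMap ℂ (fun _ : Fin m => E) F)
        else p m) fun _ => y) = fun m => p m fun _ => y := by
      funext m
      by_cases hm : m < k
      · simp [hm, (hd m hm y).symm]
      · simp [hm]
    rw [show (fun m => (fun m => if m < k then 0 else p m) m fun _ => y : ℕ → F)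
      = fun m => p m fun _ => y from he]
    exact hs

lemma derivSeries_apply_eq_sum {E F : Type*} [NormedAddCommGroup E] [NormedSpace ℂ E]
    [NormedAddCommGroup F] [NormedSpace ℂ F]
    (p : FormalMultilinearSeries ℂ E F) (m : ℕ) (y v : E) :
    p.derivSeries m (fun _ => y) v
      = ∑ t : Fin (1+m), p (1+m) (fun s => if s = t then v else y) := by
  simp only [FormalMultilinearSeries.derivSeries,
    ContinuousLinearMap.compFormalMultilinearSeries_apply,
    FormalMultilinearSeries.changeOriginSeries,
    ContinuousLinearMap.compContinuousMultilinearMap_coe, ContinuousLinearEquiv.coe_coe,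
    LinearIsometryEquiv.coe_coe, Function.comp_apply, ContinuousMultilinearMap.sum_apply, map_sum,
    ContinuousLinearMap.coe_sum', Finset.sum_apply, continuousMultilinearCurryFin1_apply,
    Matrix.zero_empty]
  rw [show (Fin.snoc ![] v : Fin 1 → E) = fun _ => v by
    funext i
    have : i = Fin.last 0 := by omega
    rw [this, Fin.snoc_last]]
  have hbij : Function.Bijective (fun t : Fin (1+m) =>
      (⟨({t}ᶜ : Finset (Fin (1+m))), by simp [Finset.card_compl]⟩ :
        { s : Finset (Fin (1+m)) // s.card = m })) := by
    constructor
    · intro a b hab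
      have := Subtype.ext_iff.mp hab
      have h2 : ({a} : Finset (Fin (1+m))) = {b} := compl_injective this
      exact Finset.singleton_injective h2
    · rintro ⟨s, hs⟩
      have hcard : (sᶜ : Finset (Fin (1+m))).card = 1 := by
        rw [Finset.card_compl, hs]; simp
      obtain ⟨a, ha⟩ := Finset.card_eq_one.mp hcard
      refine ⟨a, Subtype.ext ?_⟩
      show ({a}ᶜ : Finset (Fin (1+m))) = s
      rw [← ha, compl_compl]
  rw [← Fintype.sum_bijective _ hbij _ _ (fun t => ?_)]
  rw [p.changeOriginSeriesTerm_apply]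
  congr 1
  funext i
  by_cases hit : i = t
  · subst hit; simp [Finset.piecewise]
  · simp [Finset.piecewise, hit, Finset.mem_compl]

/-- Combinatorial resonance extraction. -/
lemma resonance_extraction {n N : ℕ} (lam : Fin n → ℂ)
    (c : (Fin N → Fin n) → Fin n → ℂ)
    (H1 : ∀ (z : Fin n → ℂ) (i : Fin n),
      ∑ f : Fin N → Fin n, ((∑ t, lam (f t)) * ∏ s, z (f s)) * c f i
        = ∑ f : Fin N → Fin n, (∏ s, z (f s)) * (lam i * c f i))
    (H2 : ∃ (z : Fin n → ℂ) (i : Fin n), (∑ f : Fin N → Fin n, (∏ s, z (f s)) * c f i) ≠ 0) :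
    ∃ (kv : Fin n → ℕ) (j : Fin n),
      (∑ i, kv i) = N ∧ (∑ i, (kv i : ℂ) * lam i) = lam j := by
  classical
  obtain ⟨z₀, i₀, hz₀⟩ := H2
  -- the exponent of the monomial attached to `f`
  set e : (Fin N → Fin n) → (Fin n →₀ ℕ) := fun f => ∑ t, Finsupp.single (f t) 1 with he
  have he_apply : ∀ f i, e f i = #{t ∈ (univ : Finset (Fin N)) | f t = i} := by
    intro f i
    rw [he]
    simp only [Finsupp.coe_finset_sum, Finset.sum_apply]
    rw [Finset.card_filter]
    congr 1; funext t
    rw [Finsupp.single_apply]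
  have he_sum : ∀ f, (∑ i, e f i) = N := by
    intro f
    have := Finset.card_eq_sum_card_fiberwise
      (f := f) (s := (univ : Finset (Fin N))) (t := (univ : Finset (Fin n)))
      (fun x _ => mem_univ _)
    simp only [card_univ, Fintype.card_fin] at this
    exact (Finset.sum_congr rfl fun i _ => he_apply f i).trans this.symm
  have hprod : ∀ (z : Fin n → ℂ) f, (∏ i, z i ^ (e f i)) = ∏ s, z (f s) := by
    intro z f
    rw [← Finset.prod_fiberwise_of_maps_to (g := f)
      (t := (univ : Finset (Fin n))) (fun x _ => mem_univ _) (fun s => z (f s))]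
    refine Finset.prod_congr rfl fun i _ => ?_
    rw [he_apply]
    calc z i ^ #{t ∈ (univ : Finset (Fin N)) | f t = i}
        = ∏ _t ∈ {t ∈ (univ : Finset (Fin N)) | f t = i}, z i := (Finset.prod_const _).symm
      _ = ∏ t ∈ {t ∈ (univ : Finset (Fin N)) | f t = i}, z (f t) :=
          Finset.prod_congr rfl (fun t ht => by rw [(Finset.mem_filter.mp ht).2])
  have heval : ∀ (z : Fin n → ℂ) (a : ℂ) f,
      MvPolynomial.eval z (MvPolynomial.monomial (e f) a) = a * ∏ s, z (f s) := by
    intro z a f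
    rw [MvPolynomial.eval_monomial]
    congr 1
    rw [Finsupp.prod_fintype]
    · exact hprod z f
    · intro i; exact pow_zero _
  have hlamsum : ∀ f, (∑ t, lam (f t)) = ∑ i, (e f i : ℂ) * lam i := by
    intro f
    rw [← Finset.sum_fiberwise_of_maps_to (g := f)
      (t := (univ : Finset (Fin n))) (fun x _ => mem_univ _) (fun s => lam (f s))]
    refine Finset.sum_congr rfl fun i _ => ?_
    rw [he_apply]
    calc ∑ t ∈ {t ∈ (univ : Finset (Fin N)) | f t = i}, lam (f t)
        = ∑ _t ∈ {t ∈ (univ : Finset (Fin N)) | f t = i}, lam i :=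
          Finset.sum_congr rfl (fun t ht => by rw [(Finset.mem_filter.mp ht).2])
      _ = (#{t ∈ (univ : Finset (Fin N)) | f t = i} : ℂ) * lam i := by
          rw [Finset.sum_const, nsmul_eq_mul]
  -- polynomials
  set Q0 : MvPolynomial (Fin n) ℂ :=
    ∑ f : Fin N → Fin n, MvPolynomial.monomial (e f) (c f i₀) with hQ0
  set Q1 : MvPolynomial (Fin n) ℂ :=
    ∑ f : Fin N → Fin n, MvPolynomial.monomial (e f) ((∑ t, lam (f t)) * c f i₀) with hQ1
  set Q2 : MvPolynomial (Fin n) ℂ :=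
    ∑ f : Fin N → Fin n, MvPolynomial.monomial (e f) (lam i₀ * c f i₀) with hQ2
  have hQeq : Q1 = Q2 := by
    apply MvPolynomial.funext
    intro z
    rw [hQ1, hQ2, map_sum, map_sum]
    calc (∑ f : Fin N → Fin n,
          MvPolynomial.eval z (MvPolynomial.monomial (e f) ((∑ t, lam (f t)) * c f i₀)))
        = ∑ f : Fin N → Fin n, ((∑ t, lam (f t)) * ∏ s, z (f s)) * c f i₀ := by
          refine Finset.sum_congr rfl fun f _ => ?_
          rw [heval]; ring
      _ = ∑ f : Fin N → Fin n, (∏ s, z (f s)) * (lam i₀ * c f i₀) := H1 z i₀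
      _ = ∑ f : Fin N → Fin n,
          MvPolynomial.eval z (MvPolynomial.monomial (e f) (lam i₀ * c f i₀)) := by
          refine Finset.sum_congr rfl fun f _ => ?_
          rw [heval]; ring
  have hQ0ne : Q0 ≠ 0 := by
    intro h
    apply hz₀
    have : MvPolynomial.eval z₀ Q0 = 0 := by rw [h]; simp
    rw [hQ0, map_sum] at this
    rw [← this]
    refine Finset.sum_congr rfl fun f _ => ?_
    rw [heval]; ring
  obtain ⟨μ, hμ⟩ := MvPolynomial.ne_zero_iff.mp hQ0ne
  have hcoeff0 : MvPolynomial.coeff μ Q0 = ∑ f ∈ {f : Fin N → Fin n | e f = μ}, c f i₀ := by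
    rw [hQ0, MvPolynomial.coeff_sum]
    rw [Finset.sum_congr rfl fun f _ => MvPolynomial.coeff_monomial μ (e f) (c f i₀)]
    rw [← Finset.sum_filter]
  set T : Finset (Fin N → Fin n) := {f : Fin N → Fin n | e f = μ} with hT
  have hγ : (∑ f ∈ T, c f i₀) ≠ 0 := by rw [← hcoeff0]; exact hμ
  have hTne : T.Nonempty := by
    by_contra h
    rw [Finset.not_nonempty_iff_eq_empty] at h
    rw [h, Finset.sum_empty] at hγ
    exact hγ rfl
  obtain ⟨f₀, hf₀⟩ := hTne
  have hf₀μ : e f₀ = μ := by simpa [hT] using hf₀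
  refine ⟨fun i => μ i, i₀, ?_, ?_⟩
  · rw [← hf₀μ]
    simpa using he_sum f₀
  · -- compare coefficients of Q1 = Q2 at μ
    have h1 : MvPolynomial.coeff μ Q1 = (∑ i, (μ i : ℂ) * lam i) * ∑ f ∈ T, c f i₀ := by
      rw [hQ1, MvPolynomial.coeff_sum, ← Finset.sum_filter_add_sum_filter_not _ (fun f => e f = μ)]
      rw [Finset.mul_sum]
      have h2 : ∑ f ∈ {f : Fin N → Fin n | ¬ e f = μ},
          MvPolynomial.coeff μ (MvPolynomial.monomial (e f) ((∑ t, lam (f t)) * c f i₀)) = 0 := by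
        refine Finset.sum_eq_zero fun f hf => ?_
        rw [MvPolynomial.coeff_monomial, if_neg]
        simpa using (Finset.mem_filter.mp hf).2
      rw [h2, add_zero]
      refine Finset.sum_congr rfl fun f hf => ?_
      have hfμ : e f = μ := by simpa using (Finset.mem_filter.mp hf).2
      rw [MvPolynomial.coeff_monomial, if_pos hfμ, hlamsum f, hfμ]
    have h2 : MvPolynomial.coeff μ Q2 = lam i₀ * ∑ f ∈ T, c f i₀ := by
      rw [hQ2, MvPolynomial.coeff_sum, ← Finset.sum_filter_add_sum_filter_not _ (fun f => e f = μ)]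
      rw [Finset.mul_sum]
      have h3 : ∑ f ∈ {f : Fin N → Fin n | ¬ e f = μ},
          MvPolynomial.coeff μ (MvPolynomial.monomial (e f) (lam i₀ * c f i₀)) = 0 := by
        refine Finset.sum_eq_zero fun f hf => ?_
        rw [MvPolynomial.coeff_monomial, if_neg]
        simpa using (Finset.mem_filter.mp hf).2
      rw [h3, add_zero]
      refine Finset.sum_congr rfl fun f hf => ?_
      have hfμ : e f = μ := by simpa using (Finset.mem_filter.mp hf).2
      rw [MvPolynomial.coeff_monomial, if_pos hfμ]
    have hfin : (∑ i, (μ i : ℂ) * lam i) * (∑ f ∈ T, c f i₀)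
        = lam i₀ * (∑ f ∈ T, c f i₀) := by rw [← h1, hQeq, h2]
    exact mul_right_cancel₀ hγ hfin

lemma fml_diag_congr {E F : Type*} [NormedAddCommGroup E] [NormedSpace ℂ E]
    [NormedAddCommGroup F] [NormedSpace ℂ F]
    (p : FormalMultilinearSeries ℂ E F) {a b : ℕ} (h : a = b) (y : E) :
    (p a fun _ => y) = p b fun _ => y := by subst h; rfl

lemma tendsto_clm_apply' {α E F : Type*} [NormedAddCommGroup E] [NormedSpace ℂ E]
    [NormedAddCommGroup F] [NormedSpace ℂ F] {l : Filter α}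
    {M : α → E →L[ℂ] F} {v : α → E} {M₀ : E →L[ℂ] F} {v₀ : E}
    (hM : Tendsto M l (𝓝 M₀)) (hv : Tendsto v l (𝓝 v₀)) :
    Tendsto (fun a => M a (v a)) l (𝓝 (M₀ v₀)) :=
  (isBoundedBilinearMap_apply.continuous.tendsto (M₀, v₀)).comp (hM.prodMk_nhds hv)

/-- Lie bracket of vector fields on `ℂⁿ`: `[X, Y] = DY·X − DX·Y`. -/
noncomputable def lieBracketVF {n : ℕ} (X Y : (Fin n → ℂ) → (Fin n → ℂ)) :
    (Fin n → ℂ) → (Fin n → ℂ) :=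
  fun x => fderiv ℂ Y x (X x) - fderiv ℂ X x (Y x)

/-- If `ẋ = g(x)` with `g` analytic near the equilibrium `0`, `A = Dg(0)` diagonalizable
with eigenvalues `λ₁,…,λₙ` and `det A ≠ 0`, possesses an analytic Lie symmetry `X_φ`
of order `k` near the origin, then some resonance `Σ kᵢ λᵢ = λⱼ` with `Σ kᵢ = k` holds. -/
theorem analytic_lie_symmetry_resonance {n : ℕ}
    (g φ : (Fin n → ℂ) → (Fin n → ℂ))
    (hg : AnalyticAt ℂ g 0) (hg0 : g 0 = 0)
    (A : Matrix (Fin n) (Fin n) ℂ)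
    (hA : ∀ i j, A i j = fderiv ℂ g 0 (Pi.single j 1) i)
    (lam : Fin n → ℂ)
    (hdiag : ∃ P : Matrix (Fin n) (Fin n) ℂ, IsUnit P.det ∧
      A = P * Matrix.diagonal lam * P⁻¹)
    (hdet : A.det ≠ 0)
    (hφ : AnalyticAt ℂ φ 0)
    (hsym : ∀ᶠ x in nhds (0 : Fin n → ℂ), lieBracketVF g φ x = 0)
    (k : ℕ)
    (horder_lt : ∀ m < k, iteratedFDeriv ℂ m φ 0 = 0)
    (horder : iteratedFDeriv ℂ k φ 0 ≠ 0) :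
    ∃ (kv : Fin n → ℕ) (j : Fin n),
      (∑ i, kv i) = k ∧ (∑ i, (kv i : ℂ) * lam i) = lam j := by
  classical
  set A₀ : (Fin n → ℂ) →L[ℂ] (Fin n → ℂ) := fderiv ℂ g 0 with hA₀def
  have hA₀ : ∀ v : Fin n → ℂ, A₀ v = A.mulVec v := by
    intro v
    have hv : v = ∑ i, v i • (Pi.single i 1 : Fin n → ℂ) := by
      funext i'
      simp only [Finset.sum_apply, Pi.smul_apply, Pi.single_apply, smul_eq_mul]
      rw [Finset.sum_eq_single i']
      · simp
      · intro b _ hb; simp [Ne.symm hb]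
      · intro h; exact absurd (mem_univ i') h
    conv_lhs => rw [hv]
    rw [map_sum]
    funext i'
    simp only [Finset.sum_apply]
    rw [Matrix.mulVec]
    simp only [dotProduct]
    refine Finset.sum_congr rfl fun i _ => ?_
    rw [map_smul, Pi.smul_apply, smul_eq_mul, hA i' i, mul_comm]
  have hdetA : IsUnit A.det := isUnit_iff_ne_zero.mpr hdet
  obtain ⟨P, hPdet, hAP⟩ := hdiag
  have hganalytic := hg
  -- the lie bracket identity, evaluated along lines
  obtain ⟨p, hpat⟩ := hφ
  obtain ⟨r, hball⟩ := hpat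
  have hdiaglow : ∀ m, m < k → ∀ y : Fin n → ℂ, (p m fun _ => y) = 0 := by
    intro m hm y
    have h1 := hball.factorial_smul y m
    rw [horder_lt m hm] at h1
    have h2 : ((Nat.factorial m : ℂ)) • (p m fun _ => y) = 0 := by
      rw [Nat.cast_smul_eq_nsmul]; exact h1
    rcases smul_eq_zero.mp h2 with h3 | h3
    · exact absurd h3 (by exact_mod_cast Nat.factorial_ne_zero m)
    · exact h3
  rcases k with _ | j
  · -- k = 0 : contradiction since φ 0 = 0 yet iteratedFDeriv 0 φ 0 ≠ 0
    exfalso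
    have h0 : lieBracketVF g φ 0 = 0 := hsym.self_of_nhds
    have h1 : A₀ (φ 0) = 0 := by
      have := h0
      rw [lieBracketVF, hg0, map_zero, zero_sub, neg_eq_zero] at this
      exact this
    have hφ0 : φ 0 = 0 := by
      have h2 : A.mulVec (φ 0) = 0 := by rw [← hA₀ (φ 0)]; exact h1
      have h3 : A⁻¹.mulVec (A.mulVec (φ 0)) = 0 := by rw [h2, Matrix.mulVec_zero]
      rwa [Matrix.mulVec_mulVec, Matrix.nonsing_inv_mul A hdetA, Matrix.one_mulVec] at h3
    apply horder
    ext v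
    rw [iteratedFDeriv_zero_apply, hφ0]
    rfl
  · -- k = j + 1
    -- truncated series
    set p' : FormalMultilinearSeries ℂ (Fin n → ℂ) (Fin n → ℂ) :=
      fun m => if m < j + 1 then 0 else p m with hp'
    have hball' : HasFPowerSeriesOnBall φ p' 0 r :=
      hasFPowerSeriesOnBall_trunc hball hdiaglow
    have hp'low : ∀ m, m < j + 1 → p' m = 0 := by
      intro m hm
      show (if m < j + 1 then (0 : ContinuousMultilinearMap ℂ
        (fun _ : Fin m => Fin n → ℂ) (Fin n → ℂ)) else p m) = 0
      rw [if_pos hm]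
    have hp'top : p' (1+j) = p (1+j) := by
      show (if 1+j < j + 1 then (0 : ContinuousMultilinearMap ℂ
        (fun _ : Fin (1+j) => Fin n → ℂ) (Fin n → ℂ)) else p (1+j)) = p (1+j)
      rw [if_neg (by omega)]
    -- nonvanishing of the diagonal of the degree-(j+1) coefficient
    have hΦne : ∃ y₀ : Fin n → ℂ, (p (1+j) fun _ => y₀) ≠ 0 := by
      by_contra hcon
      push_neg at hcon
      apply horder
      set p'' : FormalMultilinearSeries ℂ (Fin n → ℂ) (Fin n → ℂ) :=
        fun m => if m < j + 2 then 0 else p m with hp''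
      have hd2 : ∀ m, m < j + 2 → ∀ y : Fin n → ℂ, (p m fun _ => y) = 0 := by
        intro m hm y
        rcases Nat.lt_or_ge m (j+1) with h | h
        · exact hdiaglow m h y
        · have hmk : m = j + 1 := by omega
          subst hmk
          rw [← fml_diag_congr p (by omega : 1+j = j+1) y]
          exact hcon y
      have hball'' : HasFPowerSeriesOnBall φ p'' 0 r :=
        hasFPowerSeriesOnBall_trunc hball hd2
      apply iteratedFDeriv_zero_of_series_zero (j+1) hball''
      intro m hm
      show (if m < j + 2 then (0 : ContinuousMultilinearMap ℂ
        (fun _ : Fin m => Fin n → ℂ) (Fin n → ℂ)) else p m) = 0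
      rw [if_pos (by omega)]
    -- derivative series
    have hfd : HasFPowerSeriesOnBall (fderiv ℂ φ) p'.derivSeries 0 r := hball'.fderiv
    have hq0 : ∀ m, m < j → p'.derivSeries m = 0 := fun m hm =>
      derivSeries_term_zero p' m (hp'low (m+1) (by omega))
    -- power series for g
    obtain ⟨pg, rg, hgball⟩ := hg
    have hg0diag : ∀ y : Fin n → ℂ, (pg 0 fun _ => y) = 0 := by
      intro y
      have h1 := hgball.iteratedFDeriv_zero_apply_diag
      rw [← h1]
      rw [iteratedFDeriv_zero_apply, hg0]
    have hpg1 : ∀ y : Fin n → ℂ, (pg 1 fun _ => y) = A₀ y := by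
      intro y
      have h1 := hgball.factorial_smul y 1
      rw [iteratedFDeriv_one_apply] at h1
      simpa [Nat.factorial] using h1
    -- the key identity
    have key : ∀ y : Fin n → ℂ,
        (p'.derivSeries j fun _ => y) (A₀ y) = A₀ (p' (j+1) fun _ => y) := by
      intro y
      have hline : Filter.Tendsto (fun t : ℂ => t • y) (𝓝[≠] (0:ℂ)) (𝓝 (0 : Fin n → ℂ)) := by
        have h1 : Continuous (fun t : ℂ => t • y) := continuous_id.smul continuous_const
        have h2 : Filter.Tendsto (fun t : ℂ => t • y) (𝓝[≠] (0:ℂ)) (𝓝 ((0:ℂ) • y)) :=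
          ((h1.tendsto 0).mono_left nhdsWithin_le_nhds)
        simpa using h2
      have lim2 := limit_of_vanishing hfd.hasFPowerSeriesAt j y
        (fun m hm => by rw [hq0 m hm]; rfl)
      have lim3 := limit_of_vanishing hgball.hasFPowerSeriesAt 1 y
        (fun m hm => by
          have : m = 0 := by omega
          subst this
          exact hg0diag y)
      rw [hpg1 y] at lim3
      have lim1 := limit_of_vanishing hball'.hasFPowerSeriesAt (j+1) y
        (fun m hm => by rw [hp'low m hm]; rfl)
      have lim4 : Filter.Tendsto (fun t : ℂ => fderiv ℂ g (t • y)) (𝓝[≠] (0:ℂ)) (𝓝 A₀) := by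
        have hc : ContinuousAt (fderiv ℂ g) 0 := (hganalytic.fderiv).continuousAt
        exact hc.tendsto.comp hline
      have T1 : Filter.Tendsto
          (fun t : ℂ => ((t:ℂ)^(j+1))⁻¹ • (fderiv ℂ φ (t • y) (g (t • y))))
          (𝓝[≠] (0:ℂ)) (𝓝 ((p'.derivSeries j fun _ => y) (A₀ y))) := by
        have h := tendsto_clm_apply' lim2 lim3
        apply h.congr'
        filter_upwards [self_mem_nhdsWithin] with t ht
        have ht0 : (t:ℂ) ≠ 0 := ht
        show ((t^j)⁻¹ • fderiv ℂ φ (t • y)) ((t^1)⁻¹ • g (t • y))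
          = (t^(j+1))⁻¹ • (fderiv ℂ φ (t • y) (g (t • y)))
        rw [ContinuousLinearMap.smul_apply, map_smul, smul_smul, ← mul_inv, ← pow_add]
      have T2 : Filter.Tendsto
          (fun t : ℂ => ((t:ℂ)^(j+1))⁻¹ • (fderiv ℂ g (t • y) (φ (t • y))))
          (𝓝[≠] (0:ℂ)) (𝓝 (A₀ (p' (j+1) fun _ => y))) := by
        have h := tendsto_clm_apply' lim4 lim1
        apply h.congr'
        filter_upwards [self_mem_nhdsWithin] with t ht
        rw [map_smul]
      have hev : ∀ᶠ t in 𝓝[≠] (0:ℂ),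
          ((t:ℂ)^(j+1))⁻¹ • (fderiv ℂ φ (t • y) (g (t • y)))
            = ((t:ℂ)^(j+1))⁻¹ • (fderiv ℂ g (t • y) (φ (t • y))) := by
        have h2 : ∀ᶠ t in 𝓝[≠] (0:ℂ), lieBracketVF g φ (t • y) = 0 := hline.eventually hsym
        filter_upwards [h2] with t ht
        rw [lieBracketVF] at ht
        rw [sub_eq_zero.mp ht]
      exact tendsto_nhds_unique (T1.congr' hev) T2
    -- eigenvectors
    set w : Fin n → (Fin n → ℂ) := fun i => P.mulVec (Pi.single i 1) with hw
    set Mw : (Fin (1+j) → Fin n) → (Fin n → ℂ) := fun f => p (1+j) (fun s => w (f s)) with hMw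
    set c : (Fin (1+j) → Fin n) → Fin n → ℂ := fun f => P⁻¹.mulVec (Mw f) with hc
    have hPP : ∀ v : Fin n → ℂ, P.mulVec (P⁻¹.mulVec v) = v := by
      intro v
      rw [Matrix.mulVec_mulVec, Matrix.mul_nonsing_inv P hPdet, Matrix.one_mulVec]
    have hPP' : ∀ v : Fin n → ℂ, P⁻¹.mulVec (P.mulVec v) = v := by
      intro v
      rw [Matrix.mulVec_mulVec, Matrix.nonsing_inv_mul P hPdet, Matrix.one_mulVec]
    have hMc : ∀ f, Mw f = P.mulVec (c f) := fun f => (hPP (Mw f)).symm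
    have hAP' : A * P = P * Matrix.diagonal lam := by
      rw [hAP, Matrix.mul_assoc, Matrix.nonsing_inv_mul P hPdet, Matrix.mul_one]
    have hsingle : ∀ (z : Fin n → ℂ), z = ∑ i, z i • (Pi.single i 1 : Fin n → ℂ) := by
      intro z
      funext i'
      simp only [Finset.sum_apply, Pi.smul_apply, Pi.single_apply, smul_eq_mul]
      rw [Finset.sum_eq_single i']
      · simp
      · intro b _ hb; simp [Ne.symm hb]
      · intro h; exact absurd (mem_univ i') h
    have hPz : ∀ z : Fin n → ℂ, P.mulVec z = ∑ i, z i • w i := by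
      intro z
      conv_lhs => rw [hsingle z]
      rw [← Matrix.mulVecLin_apply, map_sum]
      refine Finset.sum_congr rfl fun i _ => ?_
      rw [map_smul, Matrix.mulVecLin_apply]
    have hexp : ∀ (coef : Fin (1+j) → Fin n → ℂ),
        (p (1+j) (fun s => ∑ i, coef s i • w i))
          = ∑ f : Fin (1+j) → Fin n, (∏ s, coef s (f s)) • Mw f := by
      intro coef
      rw [ContinuousMultilinearMap.map_sum]
      exact Finset.sum_congr rfl fun f _ =>
        (p (1+j)).map_smul_univ (fun s => coef s (f s)) (fun s => w (f s))
    have hAz : ∀ z : Fin n → ℂ, A₀ (P.mulVec z) = ∑ i, (lam i * z i) • w i := by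
      intro z
      rw [hA₀, Matrix.mulVec_mulVec, hAP', ← Matrix.mulVec_mulVec, hPz]
      refine Finset.sum_congr rfl fun i _ => ?_
      rw [Matrix.mulVec_diagonal]
    have hPinv_sum : ∀ (a : (Fin (1+j) → Fin n) → ℂ) (v : (Fin (1+j) → Fin n) → Fin n → ℂ),
        P⁻¹.mulVec (∑ f, a f • P.mulVec (v f)) = ∑ f, a f • v f := by
      intro a v
      rw [← Matrix.mulVecLin_apply, map_sum]
      refine Finset.sum_congr rfl fun f _ => ?_
      rw [map_smul, Matrix.mulVecLin_apply, hPP']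
    -- expand the key identity in eigencoordinates
    have keyz : ∀ (z : Fin n → ℂ) (i : Fin n),
        ∑ f : Fin (1+j) → Fin n, ((∑ t, lam (f t)) * ∏ s, z (f s)) * c f i
          = ∑ f : Fin (1+j) → Fin n, (∏ s, z (f s)) * (lam i * c f i) := by
      intro z i
      have hkey := key (P.mulVec z)
      -- LHS expansion
      rw [derivSeries_apply_eq_sum] at hkey
      have hLHS : ∀ t : Fin (1+j),
          (p' (1+j) fun s => if s = t then A₀ (P.mulVec z) else P.mulVec z)
            = ∑ f : Fin (1+j) → Fin n,
              (lam (f t) * ∏ s, z (f s)) • Mw f := by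
        intro t
        rw [hp'top]
        have harg : (fun s : Fin (1+j) => if s = t then A₀ (P.mulVec z) else P.mulVec z)
            = fun s => ∑ i, (if s = t then lam i * z i else z i) • w i := by
          funext s
          by_cases hs : s = t
          · rw [if_pos hs, hAz z]
            exact Finset.sum_congr rfl fun i _ => by rw [if_pos hs]
          · rw [if_neg hs, hPz z]
            exact Finset.sum_congr rfl fun i _ => by rw [if_neg hs]
        rw [harg, hexp]
        refine Finset.sum_congr rfl fun f _ => ?_
        congr 1
        calc ∏ s, (if s = t then lam (f s) * z (f s) else z (f s))
            = ∏ s, ((if s = t then lam (f s) else 1) * z (f s)) :=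
              Finset.prod_congr rfl fun s _ => by split_ifs <;> ring
          _ = (∏ s, if s = t then lam (f s) else 1) * ∏ s, z (f s) :=
              Finset.prod_mul_distrib
          _ = lam (f t) * ∏ s, z (f s) := by
              rw [Finset.prod_ite_eq' univ t (fun s => lam (f s))]
              simp
      rw [Finset.sum_congr rfl (fun t _ => hLHS t)] at hkey
      rw [Finset.sum_comm] at hkey
      have hLHS2 : ∀ f : Fin (1+j) → Fin n,
          (∑ t : Fin (1+j), (lam (f t) * ∏ s, z (f s)) • Mw f)
            = ((∑ t, lam (f t)) * ∏ s, z (f s)) • P.mulVec (c f) := by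
        intro f
        rw [← Finset.sum_smul, ← Finset.sum_mul, hMc f]
      rw [Finset.sum_congr rfl (fun f _ => hLHS2 f)] at hkey
      -- RHS expansion
      have hRHS : A₀ (p' (j+1) fun _ => P.mulVec z)
          = ∑ f : Fin (1+j) → Fin n, (∏ s, z (f s)) • P.mulVec (Matrix.diagonal lam
              |>.mulVec (c f)) := by
        rw [fml_diag_congr p' (by omega : j+1 = 1+j), hp'top]
        have harg : (fun _ : Fin (1+j) => P.mulVec z) = fun s => ∑ i, z i • w i := by
          funext s; exact hPz z
        rw [harg, hexp, map_sum]
        refine Finset.sum_congr rfl fun f _ => ?_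
        rw [map_smul]
        congr 1
        rw [hA₀, hMc f, Matrix.mulVec_mulVec, hAP', ← Matrix.mulVec_mulVec]
      rw [hRHS] at hkey
      -- apply P⁻¹ to both sides
      have hkey2 := congrArg (fun v => P⁻¹.mulVec v) hkey
      simp only [hPinv_sum] at hkey2
      -- take the i-th component
      have hkey3 := congrFun hkey2 i
      simp only [Finset.sum_apply, Pi.smul_apply, smul_eq_mul] at hkey3
      calc ∑ f : Fin (1+j) → Fin n, ((∑ t, lam (f t)) * ∏ s, z (f s)) * c f i
          = ∑ f : Fin (1+j) → Fin n,
              (∏ s, z (f s)) * (Matrix.diagonal lam).mulVec (c f) i := hkey3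
        _ = ∑ f : Fin (1+j) → Fin n, (∏ s, z (f s)) * (lam i * c f i) := by
            refine Finset.sum_congr rfl fun f _ => ?_
            rw [Matrix.mulVec_diagonal]
    -- nondegeneracy
    have H2 : ∃ (z : Fin n → ℂ) (i : Fin n),
        (∑ f : Fin (1+j) → Fin n, (∏ s, z (f s)) * c f i) ≠ 0 := by
      obtain ⟨y₀, hy₀⟩ := hΦne
      refine ⟨P⁻¹.mulVec y₀, ?_⟩
      by_contra hcon
      push_neg at hcon
      apply hy₀
      have hdiag0 : (p (1+j) fun _ => y₀)
          = ∑ f : Fin (1+j) → Fin n, (∏ s, (P⁻¹.mulVec y₀) (f s)) • Mw f := by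
        conv_lhs => rw [show y₀ = P.mulVec (P⁻¹.mulVec y₀) from (hPP y₀).symm]
        rw [show (fun _ : Fin (1+j) => P.mulVec (P⁻¹.mulVec y₀))
          = fun s => ∑ i, (P⁻¹.mulVec y₀) i • w i from funext fun s => hPz _]
        exact hexp _
      have hvec : ∑ f : Fin (1+j) → Fin n, (∏ s, (P⁻¹.mulVec y₀) (f s)) • c f = 0 := by
        funext i
        simp only [Finset.sum_apply, Pi.smul_apply, smul_eq_mul, Pi.zero_apply]
        exact hcon i
      have := congrArg (fun v => P⁻¹.mulVec v) hdiag0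
      simp only [Finset.sum_congr rfl (fun f (_ : f ∈ univ) => congrArg
        (fun u => (∏ s, (P⁻¹.mulVec y₀) (f s)) • u) (hMc f))] at this
      rw [hPinv_sum] at this
      rw [hvec] at this
      calc (p (1+j) fun _ => y₀) = P.mulVec (P⁻¹.mulVec (p (1+j) fun _ => y₀)) := (hPP _).symm
        _ = P.mulVec 0 := by rw [this]
        _ = 0 := Matrix.mulVec_zero _
    obtain ⟨kv, i₀, hkv1, hkv2⟩ := resonance_extraction lam c keyz H2
    exact ⟨kv, i₀, by omega, hkv2⟩
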